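/- Let g₁, g₂ ∈ ℝ² be linearly independent, b₁, b₂ ∈ ℝ, u_des ∈ ℝ², and suppose λ₁ ≥ 0, λ₂ ≥ 0 solve the 2×2 Gram system (⟨g₁,g₁⟩λ₁ + ⟨g₁,g₂⟩λ₂, ⟨g₂,g₁⟩λ₁ + ⟨g₂,g₂⟩λ₂) = (b₁ − ⟨g₁,u_des⟩, b₂ − ⟨g₂,u_des⟩). Then u* = u_des + λ₁g₁ + λ₂g₂ satisfies ⟨g₁, u*⟩ = b₁ and ⟨g₂, u*⟩ = b₂, and u* is the unique minimizer of u ↦ ‖u − u_des‖ over {u ∈ ℝ² : ⟨g₁, u⟩ ≥ b₁ and ⟨g₂, u⟩ ≥ b₂}. -/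
import Mathlib


open scoped RealInnerProductSpace

/-- Case 4 of the closed-form dual projection: if `g₁, g₂` are linearly
independent and the nonnegative multipliers `λ₁, λ₂` solve the 2×2 Gram
system, then `u* = u_des + λ₁ • g₁ + λ₂ • g₂` lies on both constraint
boundaries and is the unique minimizer of `u ↦ ‖u - u_des‖` over the
intersection of the two halfspaces. -/
theorem dual_projection_case4
    (g₁ g₂ : EuclideanSpace ℝ (Fin 2))
    (hind : LinearIndependent ℝ ![g₁, g₂])
    (b₁ b₂ : ℝ) (udes : EuclideanSpace ℝ (Fin 2))
    (lam₁ lam₂ : ℝ) (hlam₁ : lam₁ ≥ 0) (hlam₂ : lam₂ ≥ 0)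
    (hgram₁ : ⟪g₁, g₁⟫ * lam₁ + ⟪g₁, g₂⟫ * lam₂ = b₁ - ⟪g₁, udes⟫)
    (hgram₂ : ⟪g₂, g₁⟫ * lam₁ + ⟪g₂, g₂⟫ * lam₂ = b₂ - ⟪g₂, udes⟫) :
    ⟪g₁, udes + lam₁ • g₁ + lam₂ • g₂⟫ = b₁ ∧
    ⟪g₂, udes + lam₁ • g₁ + lam₂ • g₂⟫ = b₂ ∧
    IsMinOn (fun u : EuclideanSpace ℝ (Fin 2) => ‖u - udes‖)
      {u : EuclideanSpace ℝ (Fin 2) | ⟪g₁, u⟫ ≥ b₁ ∧ ⟪g₂, u⟫ ≥ b₂}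
      (udes + lam₁ • g₁ + lam₂ • g₂) ∧
    ∀ v ∈ {u : EuclideanSpace ℝ (Fin 2) | ⟪g₁, u⟫ ≥ b₁ ∧ ⟪g₂, u⟫ ≥ b₂},
      IsMinOn (fun u : EuclideanSpace ℝ (Fin 2) => ‖u - udes‖)
        {u : EuclideanSpace ℝ (Fin 2) | ⟪g₁, u⟫ ≥ b₁ ∧ ⟪g₂, u⟫ ≥ b₂} v →
      v = udes + lam₁ • g₁ + lam₂ • g₂ := by
  set ustar := udes + lam₁ • g₁ + lam₂ • g₂ with hus
  have h1 : ⟪g₁, ustar⟫ = b₁ := by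
    simp only [hus, inner_add_right, real_inner_smul_right]
    linarith
  have h2 : ⟪g₂, ustar⟫ = b₂ := by
    simp only [hus, inner_add_right, real_inner_smul_right]
    linarith
  have husmem : ustar ∈ {u : EuclideanSpace ℝ (Fin 2) | ⟪g₁, u⟫ ≥ b₁ ∧ ⟪g₂, u⟫ ≥ b₂} :=
    ⟨le_of_eq h1.symm, le_of_eq h2.symm⟩
  have key : ∀ u ∈ {u : EuclideanSpace ℝ (Fin 2) | ⟪g₁, u⟫ ≥ b₁ ∧ ⟪g₂, u⟫ ≥ b₂},
      ‖ustar - udes‖ ^ 2 + ‖u - ustar‖ ^ 2 ≤ ‖u - udes‖ ^ 2 := by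
    intro u hu
    obtain ⟨hu1, hu2⟩ := hu
    have hi1 : ⟪u - ustar, g₁⟫ = ⟪g₁, u⟫ - b₁ := by
      rw [real_inner_comm, inner_sub_right, h1]
    have hi2 : ⟪u - ustar, g₂⟫ = ⟪g₂, u⟫ - b₂ := by
      rw [real_inner_comm, inner_sub_right, h2]
    have hw : ustar - udes = lam₁ • g₁ + lam₂ • g₂ := by
      rw [hus]; abel
    have hinner : (0:ℝ) ≤ ⟪u - ustar, ustar - udes⟫ := by
      rw [hw, inner_add_right, real_inner_smul_right, real_inner_smul_right, hi1, hi2]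
      have := mul_nonneg hlam₁ (sub_nonneg.mpr hu1)
      have := mul_nonneg hlam₂ (sub_nonneg.mpr hu2)
      nlinarith
    have hdecomp : u - udes = (u - ustar) + (ustar - udes) := by abel
    rw [hdecomp, norm_add_sq_real]
    nlinarith
  refine ⟨h1, h2, ?_, ?_⟩
  · intro u hu
    have hk := key u hu
    have := norm_nonneg (u - udes)
    have := norm_nonneg (ustar - udes)
    have := sq_nonneg ‖u - ustar‖
    simp only [Set.mem_setOf_eq]
    nlinarith
  · intro v hv hmin
    have hle : ‖v - udes‖ ≤ ‖ustar - udes‖ := hmin husmem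
    have hk := key v hv
    have hz : ‖v - ustar‖ = 0 := by
      have := norm_nonneg (v - ustar)
      nlinarith [norm_nonneg (v - udes), norm_nonneg (ustar - udes)]
    have := norm_eq_zero.mp hz
    rw [sub_eq_zero] at this
    exact this
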